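/- arXiv:1707.01127 — 8 statements merged into one kernel-verified Lean document; each statement's English description precedes it below -/
import Mathlib

section
/- If aH ≠ bH with a, b ∉ H, and some element of aH is adjacent to some element of bH in 𝒢_H(G), then aH ∪ bH is a clique in 𝒢_H(G). -/
open scoped Pointwise

/-- The enhanced power graph of a group `K`: distinct `x, y` are adjacent iff
`x, y ∈ ⟨z⟩` for some `z ∈ K`. -/
def enhancedPowerGraph (K : Type*) [Group K] : SimpleGraph K where
  Adj x y := x ≠ y ∧ ∃ z : K, x ∈ Subgroup.zpowers z ∧ y ∈ Subgroup.zpowers z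
  symm := by
    constructor
    rintro x y ⟨hxy, z, hx, hy⟩
    exact ⟨hxy.symm, z, hy, hx⟩
  loopless := by constructor; rintro x ⟨hx, -⟩; exact hx rfl

/-- The enhanced quotient graph `𝒢_H(G)`: vertex set `(G \ H) ∪ {e}`, and distinct
vertices `x, y` are adjacent iff `xH = yH` or `xH, yH ∈ ⟨zH⟩` for some `z ∈ G`. -/
def enhancedQuotientGraph (G : Type*) [Group G] (H : Subgroup G) [H.Normal] :
    SimpleGraph {x : G // x ∉ H ∨ x = 1} where
  Adj a b := a ≠ b ∧
    ((QuotientGroup.mk (a : G) : G ⧸ H) = QuotientGroup.mk (b : G) ∨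
      ∃ z : G, (QuotientGroup.mk (a : G) : G ⧸ H) ∈
          Subgroup.zpowers (QuotientGroup.mk z) ∧
        (QuotientGroup.mk (b : G) : G ⧸ H) ∈ Subgroup.zpowers (QuotientGroup.mk z))
  symm := by
    constructor
    rintro a b ⟨hab, h | ⟨z, hz1, hz2⟩⟩
    · exact ⟨hab.symm, Or.inl h.symm⟩
    · exact ⟨hab.symm, Or.inr ⟨z, hz2, hz1⟩⟩
  loopless := by constructor; rintro a ⟨ha, -⟩; exact ha rfl

/-- If `aH ≠ bH`, `a, b ∉ H`, and some element of `aH` is adjacent to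
some element of `bH`, then `aH ∪ bH` is a clique of `𝒢_H(G)`. -/
theorem enhancedQuotientGraph_union_cosets_isClique {G : Type*} [Group G] [Fintype G]
    (H : Subgroup G) [H.Normal] (a b : G) (ha : a ∉ H) (hb : b ∉ H)
    (hab : (QuotientGroup.mk a : G ⧸ H) ≠ QuotientGroup.mk b)
    (hadj : ∃ u v : {x : G // x ∉ H ∨ x = 1}, (u : G) ∈ a • (H : Set G) ∧
      (v : G) ∈ b • (H : Set G) ∧ (enhancedQuotientGraph G H).Adj u v) :
    (enhancedQuotientGraph G H).IsClique
      {x : {x : G // x ∉ H ∨ x = 1} |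
        (x : G) ∈ a • (H : Set G) ∨ (x : G) ∈ b • (H : Set G)} := by
  have hmk : ∀ (c x : G), x ∈ c • (H : Set G) →
      (QuotientGroup.mk x : G ⧸ H) = QuotientGroup.mk c := by
    intro c x hx
    rw [mem_leftCoset_iff] at hx
    exact ((QuotientGroup.eq).mpr hx).symm
  obtain ⟨u, v, hu, hv, hne, hcase⟩ := hadj
  have hua := hmk a u hu
  have hvb := hmk b v hv
  obtain ⟨z, hza, hzb⟩ : ∃ z : G, (QuotientGroup.mk a : G ⧸ H) ∈
      Subgroup.zpowers (QuotientGroup.mk z) ∧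
      (QuotientGroup.mk b : G ⧸ H) ∈ Subgroup.zpowers (QuotientGroup.mk z) := by
    rcases hcase with h | ⟨z, h1, h2⟩
    · exact absurd (hua ▸ hvb ▸ h) hab
    · exact ⟨z, hua ▸ h1, hvb ▸ h2⟩
  intro x hx y hy hxy
  refine ⟨hxy, ?_⟩
  rcases hx with hx | hx <;> rcases hy with hy | hy
  · exact Or.inl ((hmk a x hx).trans (hmk a y hy).symm)
  · exact Or.inr ⟨z, (hmk a x hx) ▸ hza, (hmk b y hy) ▸ hzb⟩
  · exact Or.inr ⟨z, (hmk b x hx) ▸ hzb, (hmk a y hy) ▸ hza⟩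
  · exact Or.inl ((hmk b x hx).trans (hmk b y hy).symm)
end

section
/- Let a, b ∈ G \ H with |aH| = |bH| and ⟨aH⟩ ≠ ⟨bH⟩. Then no generator of ⟨aH⟩ (viewed as a coset, with any representative as vertex) is adjacent in 𝒢_H(G) to any generator of ⟨bH⟩. -/
private lemma zpowers_mem_of_orderOf_eq {K : Type*} [Group K] [Finite K] {z x y : K}
    (hx : x ∈ Subgroup.zpowers z) (hy : y ∈ Subgroup.zpowers z)
    (h : orderOf x = orderOf y) : y ∈ Subgroup.zpowers x := by
  classical
  have : Fintype K := Fintype.ofFinite K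
  have hcyc : IsCyclic (Subgroup.zpowers z) :=
    ⟨⟨⟨z, Subgroup.mem_zpowers z⟩, fun ⟨w, hw⟩ => by
      obtain ⟨k, hk⟩ := hw
      exact ⟨k, Subtype.ext (by simpa using hk)⟩⟩⟩
  set x' : Subgroup.zpowers z := ⟨x, hx⟩
  set y' : Subgroup.zpowers z := ⟨y, hy⟩
  have hox : orderOf x' = orderOf x := Subgroup.orderOf_mk x hx
  have hoy : orderOf y' = orderOf y := Subgroup.orderOf_mk y hy
  set n := orderOf x' with hn
  have hn0 : 0 < n := orderOf_pos x'
  have hcard := IsCyclic.card_pow_eq_one_le (α := Subgroup.zpowers z) hn0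
  have hsub : (Subgroup.zpowers x' : Set (Subgroup.zpowers z)).toFinset ⊆
      Finset.univ.filter fun w : Subgroup.zpowers z => w ^ n = 1 := by
    intro w hw
    simp only [Set.mem_toFinset, SetLike.mem_coe] at hw
    obtain ⟨k, hk⟩ := hw
    simp only [Finset.mem_filter, Finset.mem_univ, true_and]
    rw [← hk, ← zpow_natCast, ← zpow_mul, mul_comm, zpow_mul, zpow_natCast,
      pow_orderOf_eq_one, one_zpow]
  have hcardx : ((Subgroup.zpowers x' : Set (Subgroup.zpowers z)).toFinset).card = n := by
    rw [Set.toFinset_card]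
    exact Fintype.card_zpowers
  have heq : (Subgroup.zpowers x' : Set (Subgroup.zpowers z)).toFinset =
      Finset.univ.filter fun w : Subgroup.zpowers z => w ^ n = 1 :=
    Finset.eq_of_subset_of_card_le hsub (by rw [hcardx]; exact hcard)
  have hy' : y' ∈ Finset.univ.filter fun w : Subgroup.zpowers z => w ^ n = 1 := by
    simp only [Finset.mem_filter, Finset.mem_univ, true_and]
    have hxy' : orderOf x' = orderOf y' := by
      rw [Subgroup.orderOf_mk, Subgroup.orderOf_mk, h]
    rw [show n = orderOf y' from hxy'.symm ▸ hn]
    exact pow_orderOf_eq_one y'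
  rw [← heq] at hy'
  simp only [Set.mem_toFinset, SetLike.mem_coe] at hy'
  obtain ⟨k, hk⟩ := hy'
  exact ⟨k, by simpa using congrArg (Subtype.val) hk⟩

private lemma zpowers_eq_of_orderOf_eq {K : Type*} [Group K] [Finite K] {z x y : K}
    (hx : x ∈ Subgroup.zpowers z) (hy : y ∈ Subgroup.zpowers z)
    (h : orderOf x = orderOf y) : Subgroup.zpowers x = Subgroup.zpowers y :=
  le_antisymm (Subgroup.zpowers_le.mpr (zpowers_mem_of_orderOf_eq hy hx h.symm))
    (Subgroup.zpowers_le.mpr (zpowers_mem_of_orderOf_eq hx hy h))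

/-- If `|aH| = |bH|` and `⟨aH⟩ ≠ ⟨bH⟩`, then no generator of `⟨aH⟩` is
adjacent in `𝒢_H(G)` to any generator of `⟨bH⟩`. -/
theorem enhancedQuotientGraph_gen_not_adj {G : Type*} [Group G] [Fintype G]
    (H : Subgroup G) [H.Normal] (a b : G) (ha : a ∉ H) (hb : b ∉ H)
    (hord : orderOf (QuotientGroup.mk a : G ⧸ H) = orderOf (QuotientGroup.mk b : G ⧸ H))
    (hne : Subgroup.zpowers (QuotientGroup.mk a : G ⧸ H) ≠
      Subgroup.zpowers (QuotientGroup.mk b : G ⧸ H))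
    (x y : {x : G // x ∉ H ∨ x = 1})
    (hx : Subgroup.zpowers (QuotientGroup.mk (x : G) : G ⧸ H) =
      Subgroup.zpowers (QuotientGroup.mk a : G ⧸ H))
    (hy : Subgroup.zpowers (QuotientGroup.mk (y : G) : G ⧸ H) =
      Subgroup.zpowers (QuotientGroup.mk b : G ⧸ H)) :
    ¬ (enhancedQuotientGraph G H).Adj x y := by
  rintro ⟨hxy, hcase | ⟨z, hz1, hz2⟩⟩
  · exact hne (hx ▸ hy ▸ congrArg Subgroup.zpowers hcase ▸ rfl)
  · have hoa : orderOf (QuotientGroup.mk (x : G) : G ⧸ H) = orderOf (QuotientGroup.mk a : G ⧸ H) := by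
      rw [← Nat.card_zpowers, ← Nat.card_zpowers, hx]
    have hob : orderOf (QuotientGroup.mk (y : G) : G ⧸ H) = orderOf (QuotientGroup.mk b : G ⧸ H) := by
      rw [← Nat.card_zpowers, ← Nat.card_zpowers, hy]
    have : Finite (G ⧸ H) := Quotient.finite _
    have := zpowers_eq_of_orderOf_eq hz1 hz2 (by rw [hoa, hob, hord])
    exact hne (hx ▸ hy ▸ this)
end

section
/- Let G be a finite group, n ∈ ℕ with gcd(|G|, n) = 1. Then the enhanced power graph 𝒢(G × ℤ_n) has a cone vertex. -/
/-- If `gcd(|G|, n) = 1`, then `𝒢(G × ℤ_n)` has a cone vertex. -/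
theorem enhancedPowerGraph_prod_zmod_cone {G : Type*} [Group G] [Fintype G]
    (n : ℕ) [NeZero n] (h : Nat.gcd (Fintype.card G) n = 1) :
    ∃ v : G × Multiplicative (ZMod n), ∀ w : G × Multiplicative (ZMod n),
      w ≠ v → (enhancedPowerGraph (G × Multiplicative (ZMod n))).Adj v w := by
  refine ⟨(1, Multiplicative.ofAdd 1), fun w hw => ⟨hw.symm, (w.1, Multiplicative.ofAdd 1), ?_, ?_⟩⟩
  · have hco : Nat.Coprime (orderOf w.1) n :=
      Nat.Coprime.coprime_dvd_left orderOf_dvd_card h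
    obtain ⟨k, hk1, hk2⟩ := Nat.chineseRemainder hco 0 1
    refine ⟨(k : ℤ), ?_⟩
    simp only [zpow_natCast, Prod.pow_fst, Prod.pow_snd, Prod.ext_iff]
    constructor
    · exact orderOf_dvd_iff_pow_eq_one.mp ((Nat.modEq_zero_iff_dvd).mp hk1)
    · show Multiplicative.ofAdd (1 : ZMod n) ^ k = Multiplicative.ofAdd 1
      rw [← ofAdd_nsmul, nsmul_eq_mul, mul_one]
      congr 1
      have : (k : ZMod n) = ((1 : ℕ) : ZMod n) := (ZMod.natCast_eq_natCast_iff _ _ _).mpr hk2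
      simpa using this
  · have hco : Nat.Coprime (orderOf w.1) n :=
      Nat.Coprime.coprime_dvd_left orderOf_dvd_card h
    obtain ⟨k, hk1, hk2⟩ := Nat.chineseRemainder hco 1 (Multiplicative.toAdd w.2).val
    refine ⟨(k : ℤ), ?_⟩
    simp only [zpow_natCast, Prod.pow_fst, Prod.pow_snd, Prod.ext_iff]
    constructor
    · calc w.1 ^ k = w.1 ^ 1 := pow_eq_pow_iff_modEq.mpr hk1
        _ = w.1 := pow_one _
    · show Multiplicative.ofAdd (1 : ZMod n) ^ k = w.2
      rw [← ofAdd_nsmul, nsmul_eq_mul, mul_one]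
      have : (k : ZMod n) = ((Multiplicative.toAdd w.2).val : ZMod n) :=
        (ZMod.natCast_eq_natCast_iff _ _ _).mpr hk2
      rw [this, ZMod.natCast_val, ZMod.cast_id]
      rfl
end

section
/- The enhanced power graph 𝒢(G) of a finite group G of order n is Eulerian if and only if n is odd. -/
/-- `𝒢(G)` is Eulerian (connected with all degrees even) iff `|G|` is odd. -/
theorem enhancedPowerGraph_eulerian_iff {G : Type*} [Group G] [Fintype G] :
    ((enhancedPowerGraph G).Connected ∧
        ∀ v : G, Even ((enhancedPowerGraph G).neighborSet v).ncard) ↔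
      Odd (Fintype.card G) := by
  classical
  constructor
  · rintro ⟨-, hdeg⟩
    have h1 : (enhancedPowerGraph G).neighborSet 1 = {x : G | x ≠ 1} := by
      ext x
      simp only [SimpleGraph.mem_neighborSet, enhancedPowerGraph, Set.mem_setOf_eq]
      constructor
      · rintro ⟨hx, -⟩; exact fun h => hx (h ▸ rfl)
      · intro hx; exact ⟨fun h => hx h.symm, x, Subgroup.one_mem _, Subgroup.mem_zpowers x⟩
    have h2 := hdeg 1
    rw [h1] at h2
    have h3 : ({x : G | x ≠ 1}).ncard = Fintype.card G - 1 := by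
      rw [Set.ncard_eq_toFinset_card']
      rw [Set.toFinset_setOf]
      rw [Finset.filter_ne']
      rw [Finset.card_erase_of_mem (Finset.mem_univ 1), Finset.card_univ]
    rw [h3] at h2
    have hpos : 0 < Fintype.card G := Fintype.card_pos
    have : Fintype.card G = (Fintype.card G - 1) + 1 := (Nat.succ_pred_eq_of_pos hpos).symm
    rw [this]
    exact Even.add_one h2
  · intro hodd
    have hnoinv : ∀ x : G, x⁻¹ = x → x = 1 := by
      intro x hx
      have hx2 : x ^ 2 = 1 := by
        rw [pow_two]; nth_rewrite 1 [← hx]; exact inv_mul_cancel x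
      have hdvd : orderOf x ∣ 2 := orderOf_dvd_of_pow_eq_one hx2
      have hcard : orderOf x ∣ Fintype.card G := orderOf_dvd_card
      rcases (Nat.prime_two.eq_one_or_self_of_dvd _ hdvd) with h | h
      · exact orderOf_eq_one_iff.mp h
      · exfalso
        rw [h] at hcard
        exact (Nat.not_even_iff_odd.mpr hodd) ((even_iff_two_dvd).mpr hcard)
    constructor
    · have hreach : ∀ x : G, (enhancedPowerGraph G).Reachable x 1 := by
        intro x
        by_cases hx : x = 1
        · subst hx; rfl
        · exact SimpleGraph.Adj.reachable
            ⟨hx, x, Subgroup.mem_zpowers x, Subgroup.one_mem _⟩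
      exact SimpleGraph.Connected.mk fun x y => (hreach x).trans (hreach y).symm
    · intro v
      set Sset : Set G := {x | ∃ z : G, x ∈ Subgroup.zpowers z ∧ v ∈ Subgroup.zpowers z}
        with hSset
      have hmem : ∀ x ∈ Sset, x⁻¹ ∈ Sset := by
        rintro x ⟨z, hx, hv⟩
        exact ⟨z, Subgroup.inv_mem _ hx, hv⟩
      have hv : v ∈ Sset := ⟨v, Subgroup.mem_zpowers v, Subgroup.mem_zpowers v⟩
      have h1 : (1 : G) ∈ Sset := ⟨v, Subgroup.one_mem _, Subgroup.mem_zpowers v⟩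
      have hN : (enhancedPowerGraph G).neighborSet v = Sset \ {v} := by
        ext x
        simp only [SimpleGraph.mem_neighborSet, enhancedPowerGraph, Set.mem_diff,
          Set.mem_singleton_iff, hSset, Set.mem_setOf_eq]
        constructor
        · rintro ⟨hne, z, hvz, hxz⟩; exact ⟨⟨z, hxz, hvz⟩, fun h => hne h.symm⟩
        · rintro ⟨⟨z, hxz, hvz⟩, hne⟩; exact ⟨fun h => hne h.symm, z, hvz, hxz⟩
      rw [hN]
      rw [Set.ncard_diff_singleton_of_mem hv]
      -- now show Even (Sset.ncard - 1) via involution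
      let e : Equiv.Perm ↥Sset :=
        { toFun := fun a => ⟨(a : G)⁻¹, hmem a a.2⟩
          invFun := fun a => ⟨(a : G)⁻¹, hmem a a.2⟩
          left_inv := fun a => by simp
          right_inv := fun a => by simp }
      have he2 : e ^ 2 = 1 := by
        ext a
        simp [e, pow_two]
      have hsupp : e.support = ({⟨1, h1⟩} : Finset ↥Sset)ᶜ := by
        ext a
        simp only [Equiv.Perm.mem_support, Finset.mem_compl, Finset.mem_singleton]
        constructor
        · intro h hme
          apply h
          rw [hme]
          simp [e, Subtype.ext_iff]
        · intro h hme
          apply h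
          have : (a : G)⁻¹ = a := by
            have := congrArg (Subtype.val) hme
            simpa [e] using this
          exact Subtype.ext (hnoinv a this)
      have hcard := Equiv.Perm.two_dvd_card_support he2
      rw [hsupp, Finset.card_compl, Finset.card_singleton] at hcard
      have hncard : Sset.ncard = Fintype.card ↥Sset := by
        rw [Set.ncard_eq_toFinset_card']
        exact Set.toFinset_card Sset
      rw [hncard]
      exact (even_iff_two_dvd).mpr hcard
end

section
/- If the enhanced power graph 𝒢(G/H) is Hamiltonian, then the enhanced quotient graph 𝒢_H(G) is Hamiltonian. -/
open scoped Classical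

open SimpleGraph

namespace EQGProof


/-- Build a walk from a chain of adjacencies. -/
def mkWalk {V : Type*} {Γ : SimpleGraph V} :
    ∀ (l : List V) (a b : V), List.Chain Γ.Adj a (l ++ [b]) → Γ.Walk a b
  | [], a, b, h => Walk.cons (List.isChain_pair.mp h) Walk.nil
  | c :: l, a, b, h =>
    Walk.cons (List.chain_cons.mp h).1 (mkWalk l c b (List.chain_cons.mp h).2)

lemma mkWalk_support {V : Type*} {Γ : SimpleGraph V} :
    ∀ (l : List V) (a b : V) (h : List.Chain Γ.Adj a (l ++ [b])),
      (mkWalk l a b h).support = a :: (l ++ [b])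
  | [], a, b, h => rfl
  | c :: l, a, b, h => by
    simp [mkWalk, mkWalk_support l c b (List.chain_cons.mp h).2]

lemma mkWalk_length {V : Type*} {Γ : SimpleGraph V} :
    ∀ (l : List V) (a b : V) (h : List.Chain Γ.Adj a (l ++ [b])),
      (mkWalk l a b h).length = l.length + 1
  | [], a, b, h => rfl
  | c :: l, a, b, h => by
    simp [mkWalk, mkWalk_length l c b (List.chain_cons.mp h).2]

lemma not_mem_edges_of_isPath {V : Type*} {Γ : SimpleGraph V} {u v : V}
    (p : Γ.Walk u v) (hp : p.IsPath) (hl : p.length ≠ 1) : s(u, v) ∉ p.edges := by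
  cases p with
  | nil => simp
  | @cons _ w _ hadj q =>
    intro hmem
    rw [Walk.edges_cons, List.mem_cons] at hmem
    rcases hmem with hmem | hmem
    · rw [Sym2.eq_iff] at hmem
      rcases hmem with ⟨-, rfl⟩ | ⟨rfl, rfl⟩
      · have hq : q.IsPath := ((Walk.cons_isPath_iff hadj q).mp hp).1
        rw [Walk.isPath_iff_eq_nil] at hq
        subst hq
        simp at hl
      · exact hadj.ne rfl
    · have hu : u ∈ q.support := q.fst_mem_support_of_mem_edges hmem
      exact ((Walk.cons_isPath_iff hadj q).mp hp).2 hu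


variable {G : Type*} [Group G] [Fintype G] (H : Subgroup G) [H.Normal]

/-- the elements of the vertex set lying in the coset `q` -/
noncomputable def block (q : G ⧸ H) : List {x : G // x ∉ H ∨ x = 1} :=
  (Finset.univ.filter
    (fun v : {x : G // x ∉ H ∨ x = 1} => (QuotientGroup.mk v.1 : G ⧸ H) = q)).toList

lemma mem_block {q : G ⧸ H} {v : {x : G // x ∉ H ∨ x = 1}} :
    v ∈ block H q ↔ (QuotientGroup.mk v.1 : G ⧸ H) = q := by
  simp [block]

lemma block_nodup (q : G ⧸ H) : (block H q).Nodup := Finset.nodup_toList _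

lemma block_ne_nil (q : G ⧸ H) : block H q ≠ [] := by
  by_cases hq : q = 1
  · subst hq
    have : (⟨1, Or.inr rfl⟩ : {x : G // x ∉ H ∨ x = 1}) ∈ block H 1 := by
      rw [mem_block]; exact (QuotientGroup.eq_one_iff _).mpr H.one_mem
    exact List.ne_nil_of_mem this
  · obtain ⟨g, hg⟩ := QuotientGroup.mk_surjective q
    have hgH : g ∉ H := fun hmem => hq (hg ▸ (QuotientGroup.eq_one_iff _).mpr hmem)
    have : (⟨g, Or.inl hgH⟩ : {x : G // x ∉ H ∨ x = 1}) ∈ block H q := by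
      rw [mem_block]; exact hg
    exact List.ne_nil_of_mem this

lemma qadj_of_eq {v w : {x : G // x ∉ H ∨ x = 1}} (hne : v ≠ w)
    (hq : (QuotientGroup.mk v.1 : G ⧸ H) = QuotientGroup.mk w.1) :
    (enhancedQuotientGraph G H).Adj v w := ⟨hne, Or.inl hq⟩

lemma qadj_of_padj {v w : {x : G // x ∉ H ∨ x = 1}}
    (h : (enhancedPowerGraph (G ⧸ H)).Adj (QuotientGroup.mk v.1) (QuotientGroup.mk w.1)) :
    (enhancedQuotientGraph G H).Adj v w := by
  obtain ⟨hne, z, hz1, hz2⟩ := h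
  obtain ⟨z0, rfl⟩ := QuotientGroup.mk_surjective z
  exact ⟨fun hvw => hne (by rw [hvw]), Or.inr ⟨z0, hz1, hz2⟩⟩

lemma chain_block_aux (q : G ⧸ H) (rest : List {x : G // x ∉ H ∨ x = 1}) :
    ∀ (bs : List {x : G // x ∉ H ∨ x = 1}) (b : {x : G // x ∉ H ∨ x = 1}),
      (∀ w ∈ bs, (QuotientGroup.mk w.1 : G ⧸ H) = q) →
      (QuotientGroup.mk b.1 : G ⧸ H) = q → b ∉ bs → bs.Nodup →
      (∀ w : {x : G // x ∉ H ∨ x = 1}, (QuotientGroup.mk w.1 : G ⧸ H) = q →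
        List.Chain (enhancedQuotientGraph G H).Adj w rest) →
      List.Chain (enhancedQuotientGraph G H).Adj b (bs ++ rest)
  | [], b, _, hb, _, _, hcont => hcont b hb
  | w :: bs, b, hmem, hb, hnb, hnd, hcont => by
    rw [List.cons_append]
    refine List.Chain.cons
      (qadj_of_eq H (fun h => hnb (h ▸ List.mem_cons_self))
        (hb.trans (hmem w (List.mem_cons_self)).symm)) ?_
    exact chain_block_aux q rest bs w (fun x hx => hmem x (List.mem_cons_of_mem _ hx))
      (hmem w (List.mem_cons_self)) (List.nodup_cons.mp hnd).1
      (List.nodup_cons.mp hnd).2 hcont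

lemma chain_flatMap (tgt : {x : G // x ∉ H ∨ x = 1}) :
    ∀ (qs : List (G ⧸ H)) (v : {x : G // x ∉ H ∨ x = 1}),
      List.Chain (enhancedPowerGraph (G ⧸ H)).Adj (QuotientGroup.mk v.1)
        (qs ++ [QuotientGroup.mk tgt.1]) →
      List.Chain (enhancedQuotientGraph G H).Adj v (qs.flatMap (block H) ++ [tgt])
  | [], v, hch => by
    rw [List.nil_append] at hch
    replace hch := List.isChain_pair.mp hch
    simp only [List.flatMap_nil, List.nil_append]
    exact List.isChain_pair.mpr (qadj_of_padj H hch)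
  | q :: qs, v, hch => by
    rw [List.cons_append] at hch
    replace hch := List.isChain_cons_cons.mp hch
    obtain ⟨hadj, hch'⟩ := hch
    obtain ⟨b, bs, hbq⟩ := List.exists_cons_of_ne_nil (block_ne_nil H q)
    have hmemb : ∀ w ∈ block H q, (QuotientGroup.mk w.1 : G ⧸ H) = q :=
      fun w hw => (mem_block H).mp hw
    have hb : (QuotientGroup.mk b.1 : G ⧸ H) = q :=
      hmemb b (hbq ▸ List.mem_cons_self)
    have hnd := block_nodup H q
    rw [hbq, List.nodup_cons] at hnd
    have : (q :: qs).flatMap (block H) ++ [tgt]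
        = b :: (bs ++ (qs.flatMap (block H) ++ [tgt])) := by
      rw [List.flatMap_cons, hbq]; simp [List.append_assoc]
    rw [this]
    refine List.Chain.cons (qadj_of_padj H (by rw [hb]; exact hadj)) ?_
    refine chain_block_aux H q _ bs b
      (fun x hx => hmemb x (hbq ▸ List.mem_cons_of_mem _ hx)) hb hnd.1 hnd.2 ?_
    intro w hw
    exact chain_flatMap tgt qs w (by rw [hw]; exact hch')

end EQGProof
/-- If `𝒢(G/H)` is Hamiltonian, then `𝒢_H(G)` is Hamiltonian. -/

theorem enhancedQuotientGraph_isHamiltonian {G : Type*} [Group G] [Fintype G]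
    (H : Subgroup G) [H.Normal]
    (h : (enhancedPowerGraph (G ⧸ H)).IsHamiltonian) :
    (enhancedQuotientGraph G H).IsHamiltonian := by
  classical
  intro hcard
  set V := {x : G // x ∉ H ∨ x = 1} with hV
  set vone : V := ⟨1, Or.inr rfl⟩ with hvone
  -- the quotient is nontrivial
  have hQ : Fintype.card (G ⧸ H) ≠ 1 := by
    intro h1
    rw [Fintype.card_eq_one_iff] at h1
    obtain ⟨q₀, hq₀⟩ := h1
    have hall : ∀ x : G, x ∈ H := fun x => by
      have : (QuotientGroup.mk x : G ⧸ H) = QuotientGroup.mk 1 :=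
        (hq₀ _).trans (hq₀ _).symm
      rw [QuotientGroup.mk_one, QuotientGroup.eq_one_iff] at this
      exact this
    exact hcard (Fintype.card_eq_one_iff.mpr
      ⟨vone, fun v => Subtype.ext (v.2.resolve_left (not_not_intro (hall v.1)))⟩)
  obtain ⟨a, c, hc⟩ := h hQ
  -- rotate the cycle to start at 1
  have ha1 : (1 : G ⧸ H) ∈ c.support := hc.mem_support 1
  set r : (enhancedPowerGraph (G ⧸ H)).Walk 1 1 := c.rotate 1 ha1 with hr
  have hrc : r.IsCycle := hc.isCycle.rotate ha1
  set ts : List (G ⧸ H) := r.support.tail with hts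
  have hcnt : ∀ q : G ⧸ H, ts.count q = 1 := by
    intro q
    have hperm : List.Perm ts c.support.tail :=
      (SimpleGraph.Walk.support_rotate c 1 ha1).perm
    rw [hperm.count_eq]
    exact (SimpleGraph.Walk.isHamiltonianCycle_iff_isCycle_and_support_count_tail_eq_one.mp
      hc).2 q
  have htsne : ts ≠ [] := by
    intro hnil
    have := hcnt 1
    rw [hnil] at this
    simp at this
  -- the chain of adjacencies along the rotated cycle
  have hch : List.Chain (enhancedPowerGraph (G ⧸ H)).Adj 1 ts := by
    have h1 := r.isChain_adj_support
    rw [r.support_eq_cons] at h1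
    exact h1
  -- last element of ts is 1
  have hlast : ts.getLast htsne = 1 :=
    (List.getLast_tail (l := r.support) htsne).trans r.getLast_support
  set body' : List (G ⧸ H) := ts.dropLast with hbody'
  have htseq : body' ++ [(1 : G ⧸ H)] = ts := by
    rw [hbody', ← hlast]
    exact List.dropLast_append_getLast htsne
  have h1notin : (1 : G ⧸ H) ∉ body' := by
    intro hmem
    have hc1 := hcnt 1
    rw [← htseq, List.count_append] at hc1
    have h1 : 0 < body'.count 1 := List.count_pos_iff.mpr hmem
    have h2 : ([(1 : G ⧸ H)].count 1) = 1 := by simp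
    omega
  have hbody'nodup : body'.Nodup := by
    rw [List.nodup_iff_count_le_one]
    intro q
    calc body'.count q ≤ ts.count q :=
          (List.dropLast_sublist ts).count_le q
      _ = 1 := hcnt q
  have hmem' : ∀ q : G ⧸ H, q ≠ 1 → q ∈ body' := by
    intro q hq
    have := hcnt q
    have hqts : q ∈ ts := List.count_pos_iff.mp (by omega)
    rw [← htseq, List.mem_append, List.mem_singleton] at hqts
    exact hqts.resolve_right hq
  -- the chain, restated with endpoints `vone`
  have hmk1 : (QuotientGroup.mk vone.1 : G ⧸ H) = 1 := by
    rw [hvone]; exact QuotientGroup.mk_one _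
  have hch' : List.Chain (enhancedPowerGraph (G ⧸ H)).Adj (QuotientGroup.mk vone.1)
      (body' ++ [QuotientGroup.mk vone.1]) := by
    rw [hmk1, htseq]; exact hch
  have hQch : List.Chain (enhancedQuotientGraph G H).Adj vone
      (body'.flatMap (EQGProof.block H) ++ [vone]) :=
    EQGProof.chain_flatMap H vone body' vone hch'
  set body : List V := body'.flatMap (EQGProof.block H) with hbody
  -- basic facts about body
  have hbodynodup : body.Nodup := by
    rw [hbody, List.nodup_flatMap]
    refine ⟨fun q _ => EQGProof.block_nodup H q, ?_⟩
    refine hbody'nodup.imp ?_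
    intro q q' hqq'
    intro l hl1 hl2
    have h1 := (EQGProof.mem_block H).mp hl1
    have h2 := (EQGProof.mem_block H).mp hl2
    exact absurd (h1.symm.trans h2) hqq'
  have hvonenotin : vone ∉ body := by
    intro hmem
    rw [hbody, List.mem_flatMap] at hmem
    obtain ⟨q, hq, hvq⟩ := hmem
    rw [EQGProof.mem_block H, hmk1] at hvq
    exact h1notin (hvq ▸ hq)
  have hmemall : ∀ v : V, v ≠ vone → v ∈ body := by
    intro v hv
    have hv1 : v.1 ∉ H := by
      rcases v.2 with h1 | h1
      · exact h1
      · exact absurd (Subtype.ext h1) hv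
    have hq : (QuotientGroup.mk v.1 : G ⧸ H) ≠ 1 := by
      rw [Ne, QuotientGroup.eq_one_iff]; exact hv1
    rw [hbody, List.mem_flatMap]
    exact ⟨QuotientGroup.mk v.1, hmem' _ hq, (EQGProof.mem_block H).mpr rfl⟩
  -- body' has at least 2 elements
  have hlen3 : 3 ≤ r.length := hrc.three_le_length
  have htslen : ts.length = r.length := by
    rw [hts, List.length_tail, r.length_support]
    omega
  have hbody'len : 2 ≤ body'.length := by
    rw [hbody', List.length_dropLast]; omega
  -- destructure body'
  obtain ⟨q₁, qs', hq1⟩ := List.exists_cons_of_ne_nil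
    (show body' ≠ [] by intro hn; rw [hn] at hbody'len; simp at hbody'len)
  have hqs'ne : qs' ≠ [] := by
    intro hn; rw [hq1, hn] at hbody'len; simp at hbody'len
  obtain ⟨b, bs, hbq⟩ := List.exists_cons_of_ne_nil (EQGProof.block_ne_nil H q₁)
  set rest : List V := bs ++ qs'.flatMap (EQGProof.block H) with hrest
  have hbodyeq : body = b :: rest := by
    rw [hbody, hq1, List.flatMap_cons, hbq, hrest, List.cons_append]
  have hrestne : rest ≠ [] := by
    obtain ⟨q₂, qs'', hq2⟩ := List.exists_cons_of_ne_nil hqs'ne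
    obtain ⟨b₂, bs₂, hb2⟩ := List.exists_cons_of_ne_nil (EQGProof.block_ne_nil H q₂)
    rw [hrest, hq2, List.flatMap_cons, hb2]
    simp
  -- the chain starting at b
  rw [hbodyeq, List.cons_append] at hQch
  replace hQch : (enhancedQuotientGraph G H).Adj vone b ∧
      List.Chain (enhancedQuotientGraph G H).Adj b (rest ++ [vone]) :=
    List.isChain_cons_cons.mp hQch
  obtain ⟨hA, hch2⟩ := hQch
  set p : (enhancedQuotientGraph G H).Walk b vone := EQGProof.mkWalk rest b vone hch2
    with hp
  have hpsupp : p.support = body ++ [vone] := by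
    rw [hp, EQGProof.mkWalk_support, hbodyeq, List.cons_append]
  have hsuppnodup : (body ++ [vone]).Nodup := by
    rw [List.nodup_append]
    exact ⟨hbodynodup, List.nodup_singleton _, by
      intro x hx y hy hx'
      rw [List.mem_singleton] at hy
      exact hvonenotin (hy ▸ hx' ▸ hx)⟩
  have hppath : p.IsPath := SimpleGraph.Walk.IsPath.mk' (hpsupp ▸ hsuppnodup)
  have hplen : p.length ≠ 1 := by
    rw [hp, EQGProof.mkWalk_length]
    intro hn
    have : rest.length = 0 := by omega
    exact hrestne (List.length_eq_zero_iff.mp this)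
  refine ⟨vone, SimpleGraph.Walk.cons hA p, ?_⟩
  rw [SimpleGraph.Walk.isHamiltonianCycle_iff_isCycle_and_support_count_tail_eq_one]
  constructor
  · rw [SimpleGraph.Walk.cons_isCycle_iff]
    refine ⟨hppath, ?_⟩
    rw [Sym2.eq_swap]
    exact EQGProof.not_mem_edges_of_isPath p hppath hplen
  · intro x
    rw [SimpleGraph.Walk.support_cons, List.tail_cons, hpsupp, @List.count_append _ instBEqOfDecidableEq]
    by_cases hx : x = vone
    · subst hx
      rw [@List.count_eq_zero_of_not_mem _ instBEqOfDecidableEq _ _ _ hvonenotin]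
      simp
    · rw [@List.count_eq_one_of_mem _ instBEqOfDecidableEq _ _ _ hbodynodup (hmemall x hx)]
      rw [@List.count_eq_zero_of_not_mem _ instBEqOfDecidableEq _ x [vone] (by simp [hx])]
end

section
/- Let G/H be a finite p-group. The deleted enhanced quotient graph 𝒢*_H(G), obtained from 𝒢_H(G) by removing the vertex e, is connected if and only if G/H has a unique minimal subgroup. -/
/-- The deleted enhanced quotient graph `𝒢*_H(G)`: the enhanced quotient graph with
the identity vertex removed, i.e. the induced graph on `G \ H`. -/
def deletedEnhancedQuotientGraph (G : Type*) [Group G] (H : Subgroup G) [H.Normal] :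
    SimpleGraph {x : G // x ∉ H} where
  Adj a b := a ≠ b ∧
    ((QuotientGroup.mk (a : G) : G ⧸ H) = QuotientGroup.mk (b : G) ∨
      ∃ z : G, (QuotientGroup.mk (a : G) : G ⧸ H) ∈
          Subgroup.zpowers (QuotientGroup.mk z) ∧
        (QuotientGroup.mk (b : G) : G ⧸ H) ∈ Subgroup.zpowers (QuotientGroup.mk z))
  symm := by
    constructor
    rintro a b ⟨hab, h | ⟨z, hz1, hz2⟩⟩
    · exact ⟨hab.symm, Or.inl h.symm⟩
    · exact ⟨hab.symm, Or.inr ⟨z, hz2, hz1⟩⟩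
  loopless := by constructor; rintro a ⟨ha, -⟩; exact ha rfl


section Aux
variable {Q : Type*} [Group Q] [Finite Q] {p : ℕ}

/-- In a finite `p`-group, the `orderOf q / p` power of a nontrivial element has order `p`. -/
lemma aux_orderOf_pow_div (hp : p.Prime) (hpg : IsPGroup p Q) {q : Q} (hq : q ≠ 1) :
    orderOf (q ^ (orderOf q / p)) = p := by
  haveI : Fact p.Prime := ⟨hp⟩
  obtain ⟨k, hk⟩ := IsPGroup.iff_orderOf.mp hpg q
  have hk0 : k ≠ 0 := by
    rintro rfl
    exact hq (orderOf_eq_one_iff.mp (by simpa using hk))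
  have hdiv : orderOf q / p = p ^ (k - 1) := by
    rw [hk]
    calc p ^ k / p = p ^ k / p ^ 1 := by rw [pow_one]
      _ = p ^ (k - 1) := Nat.pow_div (Nat.one_le_iff_ne_zero.mpr hk0) hp.pos
  have h1 : (q ^ (orderOf q / p)) ^ p = 1 := by
    rw [hdiv, ← pow_mul, ← pow_succ, Nat.sub_add_cancel (Nat.one_le_iff_ne_zero.mpr hk0), ← hk,
      pow_orderOf_eq_one]
  have h2 : q ^ (orderOf q / p) ≠ 1 := by
    rw [hdiv]
    intro h
    have h3 := orderOf_dvd_of_pow_eq_one h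
    rw [hk] at h3
    have h4 := Nat.le_of_dvd (Nat.pow_pos hp.pos) h3
    have h5 : p ^ (k - 1) < p ^ k := Nat.pow_lt_pow_right hp.one_lt (by omega)
    omega
  have := orderOf_dvd_of_pow_eq_one h1
  rcases (Nat.dvd_prime hp).mp this with h | h
  · exact absurd (orderOf_eq_one_iff.mp h) h2
  · exact h

/-- An element of order `p` inside `⟨z⟩` lies in `⟨z ^ (orderOf z / p)⟩`. -/
lemma aux_mem_zpowers_pow_div (hp : p.Prime) (hpg : IsPGroup p Q) {z a : Q}
    (ha : a ∈ Subgroup.zpowers z) (hap : orderOf a = p) :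
    a ∈ Subgroup.zpowers (z ^ (orderOf z / p)) := by
  haveI : Fact p.Prime := ⟨hp⟩
  have hz : z ≠ 1 := by
    rintro rfl
    rw [Subgroup.zpowers_one_eq_bot, Subgroup.mem_bot] at ha
    rw [ha, orderOf_one] at hap
    exact hp.ne_one hap.symm
  obtain ⟨k, hk⟩ := IsPGroup.iff_orderOf.mp hpg z
  have hk0 : k ≠ 0 := by
    rintro rfl
    exact hz (orderOf_eq_one_iff.mp (by simpa using hk))
  have hdiv : orderOf z / p = p ^ (k - 1) := by
    rw [hk]
    calc p ^ k / p = p ^ k / p ^ 1 := by rw [pow_one]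
      _ = p ^ (k - 1) := Nat.pow_div (Nat.one_le_iff_ne_zero.mpr hk0) hp.pos
  obtain ⟨m, rfl⟩ := Subgroup.mem_zpowers_iff.mp ha
  have h1 : z ^ (m * p) = 1 := by
    rw [zpow_mul]
    norm_cast
    rw [← hap, pow_orderOf_eq_one]
  have h2 : (orderOf z : ℤ) ∣ m * p := orderOf_dvd_iff_zpow_eq_one.mpr h1
  rw [hk] at h2
  push_cast at h2
  have h3 : ((p : ℤ) ^ (k - 1)) ∣ m := by
    have hexp : (p : ℤ) ^ k = (p : ℤ) ^ (k - 1) * p := by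
      rw [← pow_succ, Nat.sub_add_cancel (Nat.one_le_iff_ne_zero.mpr hk0)]
    rw [hexp] at h2
    exact (mul_dvd_mul_iff_right (by exact_mod_cast hp.pos.ne' : (p : ℤ) ≠ 0)).mp h2
  obtain ⟨t, rfl⟩ := h3
  rw [hdiv]
  refine Subgroup.mem_zpowers_iff.mpr ⟨t, ?_⟩
  rw [← zpow_natCast z (p ^ (k - 1)), ← zpow_mul, Nat.cast_pow]

/-- `⟨a⟩` is an atom when `a` has order `p`. -/
lemma aux_isAtom_zpowers (hp : p.Prime) {a : Q} (hap : orderOf a = p) :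
    IsAtom (Subgroup.zpowers a) := by
  have hcard : Nat.card (Subgroup.zpowers a) = p := by rw [Nat.card_zpowers, hap]
  constructor
  · intro h
    rw [← Subgroup.card_eq_one, hcard] at h
    exact hp.one_lt.ne' h
  · intro K hK
    have hdvd : Nat.card K ∣ p := hcard ▸ Subgroup.card_dvd_of_le hK.le
    rcases (Nat.dvd_prime hp).mp hdvd with h | h
    · exact Subgroup.card_eq_one.mp h
    · exact absurd (Subgroup.eq_of_le_of_card_ge hK.le (hcard.trans h.symm).le) hK.ne

/-- Every atom of a finite `p`-group is `⟨a⟩` for some `a` of order `p`. -/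
lemma aux_atom_eq (hp : p.Prime) (hpg : IsPGroup p Q) {K : Subgroup Q} (hK : IsAtom K) :
    ∃ a : Q, orderOf a = p ∧ K = Subgroup.zpowers a := by
  obtain ⟨⟨a, haK⟩, ha⟩ := Subgroup.ne_bot_iff_exists_ne_one.mp hK.1
  have ha1 : a ≠ 1 := by simpa [Subtype.ext_iff] using ha
  set b := a ^ (orderOf a / p) with hb
  have hbp : orderOf b = p := aux_orderOf_pow_div hp hpg ha1
  have hbK : Subgroup.zpowers b ≤ K := Subgroup.zpowers_le.mpr (K.pow_mem haK _)
  rcases hK.le_iff.mp hbK with h | h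
  · rw [Subgroup.zpowers_eq_bot] at h
    rw [h, orderOf_one] at hbp
    exact absurd hbp.symm hp.ne_one
  · exact ⟨b, hbp, h.symm⟩

end Aux

theorem deletedEnhancedQuotientGraph_connected_iff {G : Type*} [Group G] [Fintype G]
    (H : Subgroup G) [H.Normal] (p : ℕ) (hp : p.Prime)
    (hpg : IsPGroup p (G ⧸ H)) (hnt : Nontrivial (G ⧸ H)) :
    (deletedEnhancedQuotientGraph G H).Connected ↔
      ∃! K : Subgroup (G ⧸ H), IsAtom K := by
  classical
  haveI : Fact p.Prime := ⟨hp⟩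
  have hne1 : ∀ x : {x : G // x ∉ H}, (QuotientGroup.mk (x : G) : G ⧸ H) ≠ 1 := fun x h =>
    x.2 ((QuotientGroup.eq_one_iff _).mp h)
  set F : {x : G // x ∉ H} → Subgroup (G ⧸ H) := fun x =>
    Subgroup.zpowers ((QuotientGroup.mk (x : G) : G ⧸ H) ^
      (orderOf (QuotientGroup.mk (x : G) : G ⧸ H) / p)) with hF
  have hFadj : ∀ {a b}, (deletedEnhancedQuotientGraph G H).Adj a b → F a = F b := by
    rintro a b ⟨hab, h | ⟨z, hz1, hz2⟩⟩
    · simp only [hF]; rw [h]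
    · have hz1' : (QuotientGroup.mk z : G ⧸ H) ≠ 1 := by
        rintro h
        rw [h, Subgroup.zpowers_one_eq_bot, Subgroup.mem_bot] at hz1
        exact hne1 a hz1
      have key : ∀ q : G ⧸ H, q ≠ 1 → q ∈ Subgroup.zpowers (QuotientGroup.mk z : G ⧸ H) →
          Subgroup.zpowers (q ^ (orderOf q / p)) =
            Subgroup.zpowers ((QuotientGroup.mk z : G ⧸ H) ^
              (orderOf (QuotientGroup.mk z : G ⧸ H) / p)) := by
        intro q hq hqz
        have h1 : orderOf (q ^ (orderOf q / p)) = p := aux_orderOf_pow_div hp hpg hq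
        have h2 : q ^ (orderOf q / p) ∈ Subgroup.zpowers (QuotientGroup.mk z : G ⧸ H) :=
          Subgroup.pow_mem _ hqz _
        have h3 := aux_mem_zpowers_pow_div hp hpg h2 h1
        apply Subgroup.eq_of_le_of_card_ge (Subgroup.zpowers_le.mpr h3)
        rw [Nat.card_zpowers, Nat.card_zpowers, h1, aux_orderOf_pow_div hp hpg hz1']
      exact (key _ (hne1 a) hz1).trans (key _ (hne1 b) hz2).symm
  have hFwalk : ∀ {a b}, (deletedEnhancedQuotientGraph G H).Walk a b → F a = F b := by
    intro a b w
    induction w with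
    | nil => rfl
    | cons h _ ih => exact (hFadj h).trans ih
  constructor
  · intro hcon
    obtain ⟨q, hq⟩ := exists_ne (1 : G ⧸ H)
    have hq1 : orderOf (q ^ (orderOf q / p)) = p := aux_orderOf_pow_div hp hpg hq
    refine ⟨Subgroup.zpowers (q ^ (orderOf q / p)), aux_isAtom_zpowers hp hq1, ?_⟩
    intro K hK
    obtain ⟨a, hap, rfl⟩ := aux_atom_eq hp hpg hK
    have ha1 : a ≠ 1 := by
      rintro rfl; rw [orderOf_one] at hap; exact hp.ne_one hap.symm
    have hsq1 : q ^ (orderOf q / p) ≠ 1 := by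
      rintro h; rw [h, orderOf_one] at hq1; exact hp.ne_one hq1.symm
    obtain ⟨g1, hg1⟩ := QuotientGroup.mk_surjective a
    obtain ⟨g2, hg2⟩ := QuotientGroup.mk_surjective (q ^ (orderOf q / p))
    have hg1H : g1 ∉ H := fun h => ha1 (hg1 ▸ (QuotientGroup.eq_one_iff g1).mpr h)
    have hg2H : g2 ∉ H := fun h => hsq1 (hg2 ▸ (QuotientGroup.eq_one_iff g2).mpr h)
    have hreach := hcon.preconnected ⟨g1, hg1H⟩ ⟨g2, hg2H⟩
    have heq := hFwalk hreach.some
    simp only [hF] at heq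
    rw [hg1, hg2, hap, Nat.div_self hp.pos, pow_one, hq1, Nat.div_self hp.pos, pow_one] at heq
    exact heq
  · rintro ⟨K, hK, huniq⟩
    obtain ⟨a, hap, rfl⟩ := aux_atom_eq hp hpg hK
    have ha1 : a ≠ 1 := by
      rintro rfl; rw [orderOf_one] at hap; exact hp.ne_one hap.symm
    obtain ⟨g, hg⟩ := QuotientGroup.mk_surjective a
    have hgH : g ∉ H := fun h => ha1 (hg ▸ (QuotientGroup.eq_one_iff g).mpr h)
    set v : {x : G // x ∉ H} := ⟨g, hgH⟩ with hv
    have hadj : ∀ x : {x : G // x ∉ H}, x ≠ v → (deletedEnhancedQuotientGraph G H).Adj x v := by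
      intro x hx
      refine ⟨hx, Or.inr ⟨(x : G), Subgroup.mem_zpowers _, ?_⟩⟩
      have h1 : orderOf ((QuotientGroup.mk (x : G) : G ⧸ H) ^
          (orderOf (QuotientGroup.mk (x : G) : G ⧸ H) / p)) = p :=
        aux_orderOf_pow_div hp hpg (hne1 x)
      have h2 := huniq _ (aux_isAtom_zpowers hp h1)
      have h3 : a ∈ Subgroup.zpowers ((QuotientGroup.mk (x : G) : G ⧸ H) ^
          (orderOf (QuotientGroup.mk (x : G) : G ⧸ H) / p)) := by
        rw [h2]; exact Subgroup.mem_zpowers a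
      have h4 : Subgroup.zpowers ((QuotientGroup.mk (x : G) : G ⧸ H) ^
          (orderOf (QuotientGroup.mk (x : G) : G ⧸ H) / p)) ≤
          Subgroup.zpowers (QuotientGroup.mk (x : G) : G ⧸ H) :=
        Subgroup.zpowers_le.mpr (Subgroup.pow_mem _ (Subgroup.mem_zpowers _) _)
      have : (QuotientGroup.mk (v : G) : G ⧸ H) = a := hg
      rw [this]
      exact h4 h3
    rw [SimpleGraph.connected_iff]
    refine ⟨?_, ⟨v⟩⟩
    intro u w
    have hu : (deletedEnhancedQuotientGraph G H).Reachable u v := by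
      by_cases h : u = v
      · rw [h]
      · exact (hadj u h).reachable
    have hw : (deletedEnhancedQuotientGraph G H).Reachable w v := by
      by_cases h : w = v
      · rw [h]
      · exact (hadj w h).reachable
    exact hu.trans hw.symm
end

section
/- Let Z = Z(G/H) be the center of G/H. If the set of primes dividing |Z| has at least two elements, then the deleted enhanced quotient graph 𝒢*_H(G) is connected. -/
/-- If `x` and `a` commute and have coprime orders, both lie in `⟨x*a⟩`. -/
lemma mem_zpowers_mul_of_coprime {Q : Type*} [Group Q] {x a : Q} (hc : Commute x a)
    (h : Nat.Coprime (orderOf x) (orderOf a)) :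
    x ∈ Subgroup.zpowers (x * a) ∧ a ∈ Subgroup.zpowers (x * a) := by
  set n := orderOf x with hn
  set m := orderOf a with hm
  have key : (1 : ℤ) = n * Nat.gcdA n m + m * Nat.gcdB n m := by
    have h2 := Nat.gcd_eq_gcd_ab n m
    rw [Nat.Coprime] at h
    rw [h] at h2
    exact_mod_cast h2
  set s := Nat.gcdA n m
  set t := Nat.gcdB n m
  have hx : x ^ (n : ℤ) = 1 := by rw [zpow_natCast, pow_orderOf_eq_one]
  have ha : a ^ (m : ℤ) = 1 := by rw [zpow_natCast, pow_orderOf_eq_one]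
  constructor
  · refine ⟨m * t, ?_⟩
    show (x * a) ^ _ = _; rw [hc.mul_zpow]
    have h1 : a ^ ((m : ℤ) * t) = 1 := by rw [zpow_mul, ha, one_zpow]
    have h2 : (m : ℤ) * t = 1 - n * s := by linarith
    rw [h1, mul_one, h2, zpow_sub, zpow_one, zpow_mul, hx, one_zpow, inv_one, mul_one]
  · refine ⟨n * s, ?_⟩
    show (x * a) ^ _ = _; rw [hc.mul_zpow]
    have h1 : x ^ ((n : ℤ) * s) = 1 := by rw [zpow_mul, hx, one_zpow]
    have h2 : (n : ℤ) * s = 1 - m * t := by linarith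
    rw [h1, one_mul, h2, zpow_sub, zpow_one, zpow_mul, ha, one_zpow, inv_one, mul_one]

/-- Two vertices whose images both lie in a common cyclic subgroup are reachable. -/
lemma deletedEnhancedQuotientGraph.reachable_of_mem {G : Type*} [Group G]
    (H : Subgroup G) [H.Normal] (u v : {x : G // x ∉ H}) (z : G)
    (hu : (QuotientGroup.mk (u : G) : G ⧸ H) ∈ Subgroup.zpowers (QuotientGroup.mk z))
    (hv : (QuotientGroup.mk (v : G) : G ⧸ H) ∈ Subgroup.zpowers (QuotientGroup.mk z)) :
    (deletedEnhancedQuotientGraph G H).Reachable u v := by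
  by_cases h : u = v
  · exact h ▸ SimpleGraph.Reachable.refl u
  · exact SimpleGraph.Adj.reachable ⟨h, Or.inr ⟨z, hu, hv⟩⟩

/-- If at least two primes divide `|Z(G/H)|`, then `𝒢*_H(G)` is connected. -/
theorem deletedEnhancedQuotientGraph_connected {G : Type*} [Group G] [Fintype G]
    (H : Subgroup G) [H.Normal]
    (h : 2 ≤ (Nat.card (Subgroup.center (G ⧸ H))).primeFactors.card) :
    (deletedEnhancedQuotientGraph G H).Connected := by
  classical
  set Q := G ⧸ H
  set Z := Subgroup.center Q
  -- get two distinct primes dividing |Z|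
  obtain ⟨p, hp, q, hq, hpq⟩ := Finset.one_lt_card.mp (lt_of_lt_of_le Nat.one_lt_two h)
  obtain ⟨hpP, hpd, -⟩ := Nat.mem_primeFactors.mp hp
  obtain ⟨hqP, hqd, -⟩ := Nat.mem_primeFactors.mp hq
  have : Fact p.Prime := ⟨hpP⟩
  have : Fact q.Prime := ⟨hqP⟩
  obtain ⟨a, hap⟩ := exists_prime_orderOf_dvd_card' (G := Z) p hpd
  obtain ⟨b, hbq⟩ := exists_prime_orderOf_dvd_card' (G := Z) q hqd
  have haQ : orderOf (a : Q) = p := by rw [← hap]; exact orderOf_injective Z.subtype Subtype.coe_injective a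
  have hbQ : orderOf (b : Q) = q := by rw [← hbq]; exact orderOf_injective Z.subtype Subtype.coe_injective b
  -- lift to G
  obtain ⟨A, hA⟩ := QuotientGroup.mk_surjective (a : Q)
  obtain ⟨B, hB⟩ := QuotientGroup.mk_surjective (b : Q)
  have hAH : A ∉ H := by
    intro hin
    have : (a : Q) = 1 := by rw [← hA, QuotientGroup.eq_one_iff]; exact hin
    rw [this, orderOf_one] at haQ; exact hpP.one_lt.ne haQ
  have hBH : B ∉ H := by
    intro hin
    have : (b : Q) = 1 := by rw [← hB, QuotientGroup.eq_one_iff]; exact hin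
    rw [this, orderOf_one] at hbQ; exact hqP.one_lt.ne hbQ
  set vA : {x : G // x ∉ H} := ⟨A, hAH⟩
  set vB : {x : G // x ∉ H} := ⟨B, hBH⟩
  have commB : Commute (a : Q) (b : Q) := Subgroup.mem_center_iff.mp b.2 (a : Q)
  -- A and B are connected
  have hAB : (deletedEnhancedQuotientGraph G H).Reachable vA vB := by
    have hco : Nat.Coprime (orderOf (a : Q)) (orderOf (b : Q)) := by
      rw [haQ, hbQ]; exact (Nat.coprime_primes hpP hqP).mpr hpq
    obtain ⟨h1, h2⟩ := mem_zpowers_mul_of_coprime commB hco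
    refine deletedEnhancedQuotientGraph.reachable_of_mem H vA vB (A * B) ?_ ?_
    · show (QuotientGroup.mk A : Q) ∈ _
      rwa [QuotientGroup.mk_mul, hA, hB]
    · show (QuotientGroup.mk B : Q) ∈ _
      rwa [QuotientGroup.mk_mul, hA, hB]
  haveI : Finite Q := Quotient.finite _
  -- a general step: from any vertex to the lift of a central element of coprime order
  have step : ∀ (w : {x : G // x ∉ H}) (c : Z) (C : G), QuotientGroup.mk C = (c : Q) →
      ∀ hCH : C ∉ H, Nat.Coprime (orderOf (QuotientGroup.mk (w : G) : Q)) (orderOf (c : Q)) →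
      (deletedEnhancedQuotientGraph G H).Reachable w ⟨C, hCH⟩ := by
    intro w c C hC hCH hco
    have hcomm : Commute (QuotientGroup.mk (w : G) : Q) (c : Q) :=
      Subgroup.mem_center_iff.mp c.2 _
    obtain ⟨h1, h2⟩ := mem_zpowers_mul_of_coprime hcomm hco
    refine deletedEnhancedQuotientGraph.reachable_of_mem H w ⟨C, hCH⟩ ((w : G) * C) ?_ ?_
    · show (QuotientGroup.mk (w : G) : Q) ∈ _
      rwa [QuotientGroup.mk_mul, hC]
    · show (QuotientGroup.mk C : Q) ∈ _
      rw [QuotientGroup.mk_mul, hC]; exact h2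
  -- every vertex reaches vA
  have main : ∀ v : {x : G // x ∉ H}, (deletedEnhancedQuotientGraph G H).Reachable v vA := by
    intro v
    set x := (v : G) with hxdef
    set xb : Q := QuotientGroup.mk x with hxb
    have hx1 : xb ≠ 1 := by
      rw [hxb, Ne, QuotientGroup.eq_one_iff]; exact v.2
    set n := orderOf xb with hnn
    have hn0 : n ≠ 0 := (orderOf_pos xb).ne'
    by_cases hpn : p ∣ n
    · -- split off the p-part of the order
      set k := n.factorization p with hk
      have hdvd : p ^ k ∣ n := Nat.ordProj_dvd n p
      set y := x ^ p ^ k with hy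
      have hyb : (QuotientGroup.mk y : Q) = xb ^ p ^ k := by
        rw [hy]; exact QuotientGroup.mk_pow H x (p ^ k)
      have hord : orderOf (xb ^ p ^ k) = n / p ^ k := by
        rw [orderOf_pow' xb (pow_ne_zero k hpP.pos.ne'), ← hnn, Nat.gcd_eq_right hdvd]
      have hcopm : Nat.Coprime p (n / p ^ k) := Nat.coprime_ordCompl hpP hn0
      by_cases hm1 : n / p ^ k = 1
      · -- the order is a p-power; go through B
        have hnpk : n = p ^ k := by
          have := Nat.ordProj_mul_ordCompl_eq_self n p
          rw [← hk] at this
          rw [hm1, mul_one] at this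
          exact this.symm
        have hqn : ¬ q ∣ n := by
          intro hd
          rw [hnpk] at hd
          exact hpq ((Nat.prime_dvd_prime_iff_eq hqP hpP).mp (hqP.dvd_of_dvd_pow hd)).symm
        have hco : Nat.Coprime (orderOf (QuotientGroup.mk (v : G) : Q)) (orderOf (b : Q)) := by
          rw [hbQ, Nat.coprime_comm]
          exact (hqP.coprime_iff_not_dvd).mpr hqn
        exact (step v b B hB hBH hco).trans hAB.symm
      · -- pass through the vertex y
        have hyne : (QuotientGroup.mk y : Q) ≠ 1 := by
          rw [hyb]
          intro h1
          exact hm1 (by rw [← hord, h1, orderOf_one])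
        have hyH : y ∉ H := fun hin => hyne ((QuotientGroup.eq_one_iff y).mpr hin)
        have r1 : (deletedEnhancedQuotientGraph G H).Reachable v ⟨y, hyH⟩ := by
          refine deletedEnhancedQuotientGraph.reachable_of_mem H v ⟨y, hyH⟩ x ?_ ?_
          · exact ⟨1, by simp [hxdef]⟩
          · refine ⟨(p ^ k : ℕ), ?_⟩
            show (QuotientGroup.mk x : Q) ^ ((p ^ k : ℕ) : ℤ) = QuotientGroup.mk y
            rw [zpow_natCast, ← hxb, ← hyb]
        have hco2 : Nat.Coprime (orderOf (QuotientGroup.mk y : Q)) (orderOf (a : Q)) := by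
          rw [hyb, hord, haQ, Nat.coprime_comm]
          exact hcopm
        exact r1.trans (step ⟨y, hyH⟩ a A hA hAH hco2)
    · -- order coprime to p: connect directly to A
      have hco : Nat.Coprime (orderOf (QuotientGroup.mk (v : G) : Q)) (orderOf (a : Q)) := by
        rw [haQ, Nat.coprime_comm]
        exact (Nat.Prime.coprime_iff_not_dvd hpP).mpr hpn
      exact step v a A hA hAH hco
  have hne : Nonempty {x : G // x ∉ H} := ⟨vA⟩
  exact ⟨fun u v => ((main u).trans (main v).symm)⟩
end

section
/- For a finite group G, the deleted enhanced power graph 𝒢*(G) (the enhanced power graph with the identity removed) is bipartite if and only if every element of G has order at most 3. -/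
/-- The deleted enhanced power graph `𝒢*(G)`: the enhanced power graph with the
identity vertex removed. -/
def deletedEnhancedPowerGraph (G : Type*) [Group G] : SimpleGraph {x : G // x ≠ 1} where
  Adj x y := x ≠ y ∧ ∃ z : G, (x : G) ∈ Subgroup.zpowers z ∧ (y : G) ∈ Subgroup.zpowers z
  symm := by
    constructor
    rintro x y ⟨hxy, z, hx, hy⟩
    exact ⟨hxy.symm, z, hy, hx⟩
  loopless := by constructor; rintro x ⟨hx, -⟩; exact hx rfl

lemma key_inv {G : Type*} [Group G] [Fintype G] (h3 : ∀ g : G, orderOf g ≤ 3)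
    {x y z : G} (hx1 : x ≠ 1) (hy1 : y ≠ 1) (hxy : x ≠ y)
    (hx : x ∈ Subgroup.zpowers z) (hy : y ∈ Subgroup.zpowers z) : y = x⁻¹ := by
  obtain ⟨a, ha⟩ := Subgroup.mem_zpowers_iff.mp hx
  obtain ⟨b, hb⟩ := Subgroup.mem_zpowers_iff.mp hy
  have hn1 : 1 ≤ orderOf z := (orderOf_pos z)
  have hn3 : orderOf z ≤ 3 := h3 z
  have hx' : x = z ^ (a % (orderOf z : ℤ)) := by
    rw [← zpow_mod_orderOf] at ha; exact ha.symm
  have hy' : y = z ^ (b % (orderOf z : ℤ)) := by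
    rw [← zpow_mod_orderOf] at hb; exact hb.symm
  have hnpos : (0 : ℤ) < (orderOf z : ℤ) := by exact_mod_cast hn1
  have hr0 : 0 ≤ a % (orderOf z : ℤ) := Int.emod_nonneg a (by omega)
  have hr1 : a % (orderOf z : ℤ) < (orderOf z : ℤ) := Int.emod_lt_of_pos a hnpos
  have hs0 : 0 ≤ b % (orderOf z : ℤ) := Int.emod_nonneg b (by omega)
  have hs1 : b % (orderOf z : ℤ) < (orderOf z : ℤ) := Int.emod_lt_of_pos b hnpos
  have hncast : (orderOf z : ℤ) ≤ 3 := by exact_mod_cast hn3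
  set r := a % (orderOf z : ℤ) with hrdef
  set s := b % (orderOf z : ℤ) with hsdef
  have hz3 : r = 2 ∨ s = 2 → z ^ (3 : ℕ) = 1 := by
    intro h
    have : orderOf z = 3 := by omega
    rw [← this]; exact pow_orderOf_eq_one z
  have hrcases : r = 0 ∨ r = 1 ∨ r = 2 := by omega
  have hscases : s = 0 ∨ s = 1 ∨ s = 2 := by omega
  have hzzz : orderOf z = 3 → z * z * z = 1 := by
    intro hn
    have h1 : z ^ (3 : ℕ) = 1 := by rw [← hn]; exact pow_orderOf_eq_one z
    calc z * z * z = z ^ (3 : ℕ) := by rw [pow_succ, pow_two]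
    _ = 1 := h1
  have hsq : z ^ (2 : ℤ) = z * z := by
    rw [show (2 : ℤ) = 1 + 1 from rfl, zpow_add, zpow_one]
  rcases hrcases with h | h | h <;> rcases hscases with h' | h' | h'
  · rw [h, zpow_zero] at hx'; exact absurd hx' hx1
  · rw [h, zpow_zero] at hx'; exact absurd hx' hx1
  · rw [h, zpow_zero] at hx'; exact absurd hx' hx1
  · rw [h', zpow_zero] at hy'; exact absurd hy' hy1
  · rw [h, zpow_one] at hx'; rw [h', zpow_one] at hy'
    exact absurd (hx'.trans hy'.symm) hxy
  · rw [h, zpow_one] at hx'; rw [h', hsq] at hy'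
    rw [hx', hy']
    exact eq_inv_of_mul_eq_one_right (by rw [← mul_assoc]; exact hzzz (by omega))
  · rw [h', zpow_zero] at hy'; exact absurd hy' hy1
  · rw [h, hsq] at hx'; rw [h', zpow_one] at hy'
    rw [hx', hy']
    exact eq_inv_of_mul_eq_one_left (by rw [← mul_assoc]; exact hzzz (by omega))
  · rw [h, hsq] at hx'; rw [h', hsq] at hy'
    exact absurd (hx'.trans hy'.symm) hxy

/-- `𝒢*(G)` is bipartite (2-colorable) iff every element of `G` has
order at most 3. -/
theorem deletedEnhancedPowerGraph_bipartite_iff {G : Type*} [Group G] [Fintype G] :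
    (deletedEnhancedPowerGraph G).Colorable 2 ↔ ∀ g : G, orderOf g ≤ 3 := by
  constructor
  · rintro ⟨c⟩ g
    by_contra h
    push_neg at h
    have hg1 : g ≠ 1 := by
      intro h1; rw [h1, orderOf_one] at h; omega
    have hpow : ∀ k : ℕ, 0 < k → k ≤ 3 → g ^ k ≠ 1 := by
      intro k hk hk3 hone
      have := Nat.le_of_dvd hk (orderOf_dvd_of_pow_eq_one hone)
      omega
    have hg2 : g ^ 2 ≠ 1 := hpow 2 (by norm_num) (by norm_num)
    have hg3 : g ^ 3 ≠ 1 := hpow 3 (by norm_num) (by norm_num)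
    set v1 : {x : G // x ≠ 1} := ⟨g, hg1⟩
    set v2 : {x : G // x ≠ 1} := ⟨g ^ 2, hg2⟩
    set v3 : {x : G // x ≠ 1} := ⟨g ^ 3, hg3⟩
    have hne12 : g ≠ g ^ 2 := by
      intro he
      apply hg1
      have : g * 1 = g * g := by rw [mul_one]; rw [pow_two] at he; exact he
      exact (mul_left_cancel this).symm
    have hne13 : g ≠ g ^ 3 := by
      intro he
      apply hg2
      have : g * 1 = g * g ^ 2 := by
        rw [mul_one, ← pow_succ']; exact he
      exact (mul_left_cancel this).symm
    have hne23 : g ^ 2 ≠ g ^ 3 := by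
      intro he
      apply hg1
      have : g ^ 2 * 1 = g ^ 2 * g := by rw [mul_one, ← pow_succ]; exact he
      exact (mul_left_cancel this).symm
    have hm1 : g ∈ Subgroup.zpowers g := Subgroup.mem_zpowers g
    have hm2 : g ^ 2 ∈ Subgroup.zpowers g := Subgroup.pow_mem _ hm1 2
    have hm3 : g ^ 3 ∈ Subgroup.zpowers g := Subgroup.pow_mem _ hm1 3
    have a12 : (deletedEnhancedPowerGraph G).Adj v1 v2 :=
      ⟨fun h => hne12 (congrArg Subtype.val h), g, hm1, hm2⟩
    have a13 : (deletedEnhancedPowerGraph G).Adj v1 v3 :=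
      ⟨fun h => hne13 (congrArg Subtype.val h), g, hm1, hm3⟩
    have a23 : (deletedEnhancedPowerGraph G).Adj v2 v3 :=
      ⟨fun h => hne23 (congrArg Subtype.val h), g, hm2, hm3⟩
    have c12 := c.valid a12
    have c13 := c.valid a13
    have c23 := c.valid a23
    have b1 : (c v1).val < 2 := (c v1).isLt
    have b2 : (c v2).val < 2 := (c v2).isLt
    have b3 : (c v3).val < 2 := (c v3).isLt
    have d12 : (c v1).val ≠ (c v2).val := fun h => c12 (Fin.ext h)
    have d13 : (c v1).val ≠ (c v3).val := fun h => c13 (Fin.ext h)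
    have d23 : (c v2).val ≠ (c v3).val := fun h => c23 (Fin.ext h)
    omega
  · intro h3
    classical
    let e : G ≃ Fin (Fintype.card G) := Fintype.equivFin G
    refine ⟨SimpleGraph.Coloring.mk
      (fun x => if (e (x : G)).val < (e ((x : G)⁻¹)).val then 0 else 1) ?_⟩
    rintro x y ⟨hne, z, hx, hy⟩
    have hyx : (y : G) = (x : G)⁻¹ :=
      key_inv h3 x.2 y.2 (fun h => hne (Subtype.ext h)) hx hy
    have hxy' : (x : G) ≠ (x : G)⁻¹ := by
      intro h
      exact hne (Subtype.ext (h.trans hyx.symm))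
    have hinj : (e (x : G)).val ≠ (e ((x : G)⁻¹)).val := by
      intro h
      exact hxy' (e.injective (Fin.ext h))
    simp only [hyx, inv_inv]
    rcases lt_or_gt_of_ne hinj with h | h
    · simp [h, not_lt.mpr (le_of_lt h)]
    · simp [h, not_lt.mpr (le_of_lt h)]
end
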